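/- There exists a graph homomorphism from a graph X to a graph Y if and only if α(X ⋉ Y) = |V(X)|, where X ⋉ Y is the homomorphic product. -/
import Mathlib


/-- The independence number of a graph. -/
noncomputable def indepNum {V : Type*} (X : SimpleGraph V) : ℕ :=
  sSup {n | ∃ s : Finset V, (∀ u ∈ s, ∀ v ∈ s, u ≠ v → ¬X.Adj u v) ∧ s.card = n}

/-- There is a graph homomorphism `X → Y` iff `α(X ⋉ Y) = |V(X)|`, where `X ⋉ Y`
is the homomorphic product. -/
theorem stmt_9 (VX VY : Type*) [Fintype VX] [Fintype VY] [DecidableEq VX] [DecidableEq VY]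
    (X : SimpleGraph VX) (Y : SimpleGraph VY)
    (Z : SimpleGraph (VX × VY))
    (hZ : ∀ p p' : VX × VY, Z.Adj p p' ↔
      (p.1 = p'.1 ∧ p.2 ≠ p'.2) ∨ (X.Adj p.1 p'.1 ∧ ¬Y.Adj p.2 p'.2)) :
    Nonempty (X →g Y) ↔ indepNum Z = Fintype.card VX := by
  have hinj : ∀ t : Finset (VX × VY), (∀ u ∈ t, ∀ v ∈ t, u ≠ v → ¬Z.Adj u v) →
      Set.InjOn Prod.fst (t : Set (VX × VY)) := by
    intro t ht p hp q hq hpq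
    by_contra hne
    have h2 : p.2 ≠ q.2 := fun h2 => hne (Prod.ext hpq h2)
    exact ht p hp q hq hne ((hZ p q).mpr (Or.inl ⟨hpq, h2⟩))
  have key : ∀ t : Finset (VX × VY), (∀ u ∈ t, ∀ v ∈ t, u ≠ v → ¬Z.Adj u v) →
      t.card ≤ Fintype.card VX := by
    intro t ht
    calc t.card = (t.image Prod.fst).card := (Finset.card_image_of_injOn (hinj t ht)).symm
      _ ≤ Fintype.card VX := by simpa using Finset.card_le_univ (t.image Prod.fst)
  have hbdd : BddAbove {n | ∃ s : Finset (VX × VY),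
      (∀ u ∈ s, ∀ v ∈ s, u ≠ v → ¬Z.Adj u v) ∧ s.card = n} :=
    ⟨Fintype.card VX, by rintro n ⟨t, ht, rfl⟩; exact key t ht⟩
  have hne : {n | ∃ s : Finset (VX × VY),
      (∀ u ∈ s, ∀ v ∈ s, u ≠ v → ¬Z.Adj u v) ∧ s.card = n}.Nonempty :=
    ⟨0, ∅, by simp⟩
  constructor
  · rintro ⟨f⟩
    set s : Finset (VX × VY) := Finset.univ.image (fun x => (x, f x)) with hs
    have hcard : s.card = Fintype.card VX := by
      rw [hs, Finset.card_image_of_injective _ (fun a b h => (Prod.mk.injEq _ _ _ _).mp h |>.1)]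
      simp
    have hind : ∀ u ∈ s, ∀ v ∈ s, u ≠ v → ¬Z.Adj u v := by
      intro u hu v hv huv
      simp only [hs, Finset.mem_image, Finset.mem_univ, true_and] at hu hv
      obtain ⟨a, rfl⟩ := hu
      obtain ⟨b, rfl⟩ := hv
      rw [hZ]
      rintro (⟨h1, h2⟩ | ⟨h1, h2⟩)
      · exact h2 (by simp at h1 ⊢; rw [h1])
      · exact h2 (f.map_adj h1)
    refine le_antisymm (csSup_le hne ?_) (le_csSup hbdd ⟨s, hind, hcard⟩)
    rintro n ⟨t, ht, rfl⟩
    exact key t ht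
  · intro h
    have hmem := Nat.sSup_mem hne hbdd
    rw [show sSup _ = indepNum Z from rfl, h] at hmem
    obtain ⟨t, ht, hcard⟩ := hmem
    have huniv : t.image Prod.fst = Finset.univ := by
      apply Finset.eq_univ_of_card
      rw [Finset.card_image_of_injOn (hinj t ht), hcard]
    have hex : ∀ x : VX, ∃ y : VY, (x, y) ∈ t := by
      intro x
      have : x ∈ t.image Prod.fst := huniv ▸ Finset.mem_univ x
      obtain ⟨p, hp, hpx⟩ := Finset.mem_image.mp this
      exact ⟨p.2, by rwa [show (x, p.2) = p from Prod.ext hpx.symm rfl]⟩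
    choose f hf using hex
    refine ⟨⟨f, ?_⟩⟩
    intro a b hab
    by_contra hY
    exact ht (a, f a) (hf a) (b, f b) (hf b)
      (fun hh => hab.ne (congrArg Prod.fst hh))
      ((hZ _ _).mpr (Or.inr ⟨hab, hY⟩))
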